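/- arXiv:2502.04006 — 2 statements merged into one kernel-verified Lean document; each statement's English description precedes it below -/
import Mathlib

section
/- Let K ⊆ ℝⁿ be a closed convex cone with nonempty interior and let x ∈ ℝⁿ with x ∉ K* ∪ (−K*), where K* is the dual cone of K. Then ℝ₊·xxᵀ is an exposed face (an exposed ray) of COP(K). -/
open Matrix
open scoped Pointwise

noncomputable section

/-- Frobenius inner product on real `n × n` matrices:
`⟨A,B⟩ = ∑ᵢⱼ Aᵢⱼ Bᵢⱼ`. -/
def mip {n : ℕ} (A B : Matrix (Fin n) (Fin n) ℝ) : ℝ :=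
  ∑ i, ∑ j, A i j * B i j

/-- `CPset S` (also used for `S₊(X)` when `S` is a subspace): the set of matrices of the
form `∑ᵢ aᵢaᵢᵀ` for a positive number of vectors `aᵢ ∈ S`. -/
def CPset {n : ℕ} (S : Set (Fin n → ℝ)) : Set (Matrix (Fin n) (Fin n) ℝ) :=
  {A | ∃ k : ℕ, 0 < k ∧ ∃ f : Fin k → (Fin n → ℝ),
        (∀ i, f i ∈ S) ∧ A = ∑ i, Matrix.vecMulVec (f i) (f i)}

/-- `COPset K`: symmetric matrices `A` with `xᵀAx ≥ 0` for all `x ∈ K`. -/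
def COPset {n : ℕ} (K : Set (Fin n → ℝ)) : Set (Matrix (Fin n) (Fin n) ℝ) :=
  {A | A.IsSymm ∧ ∀ x ∈ K, 0 ≤ x ⬝ᵥ A.mulVec x}

/-- `F` is a face of the convex cone `C`: a nonempty convex subcone such that
`a, b ∈ C`, `a + b ∈ F` imply `a, b ∈ F`. -/
def IsFaceOf {M : Type*} [AddCommMonoid M] [Module ℝ M] (C F : Set M) : Prop :=
  F.Nonempty ∧ F ⊆ C ∧ Convex ℝ F ∧ (∀ x ∈ F, ∀ c : ℝ, 0 ≤ c → c • x ∈ F) ∧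
    ∀ a ∈ C, ∀ b ∈ C, a + b ∈ F → a ∈ F ∧ b ∈ F

/-- Exposed face of a cone of matrices (w.r.t. the trace inner product). -/
def IsExposedFaceOf {n : ℕ} (C F : Set (Matrix (Fin n) (Fin n) ℝ)) : Prop :=
  IsFaceOf C F ∧ ∃ H : Matrix (Fin n) (Fin n) ℝ,
    (∀ A ∈ C, 0 ≤ mip H A) ∧ F = {A ∈ C | mip H A = 0}

/-- Dimension of a set: dimension of its linear span. -/
def setDim {M : Type*} [AddCommGroup M] [Module ℝ M] (S : Set M) : ℕ :=
  Module.finrank ℝ (Submodule.span ℝ S)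

/-- The ray `ℝ₊ • x`. -/
def rayOf {M : Type*} [AddCommMonoid M] [Module ℝ M] (x : M) : Set M :=
  {y | ∃ c : ℝ, 0 ≤ c ∧ y = c • x}

/-- An extreme ray: a one-dimensional face. -/
def IsExtremeRayOf {M : Type*} [AddCommGroup M] [Module ℝ M] (C F : Set M) : Prop :=
  IsFaceOf C F ∧ setDim F = 1

/-- The second-order cone `L^{m+1} = {x : x₀ ≥ ‖(x₁,…,xₘ)‖}`. -/
def soc (m : ℕ) : Set (Fin (m+1) → ℝ) :=
  {x | Real.sqrt (∑ i : Fin m, x i.succ ^ 2) ≤ x 0}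

/-- The boundary `∂L^{m+1} = {x : x₀ = ‖(x₁,…,xₘ)‖}`. -/
def socBd (m : ℕ) : Set (Fin (m+1) → ℝ) :=
  {x | Real.sqrt (∑ i : Fin m, x i.succ ^ 2) = x 0}

/-- The interior `int L^{m+1} = {x : x₀ > ‖(x₁,…,xₘ)‖}`. -/
def socInt (m : ℕ) : Set (Fin (m+1) → ℝ) :=
  {x | Real.sqrt (∑ i : Fin m, x i.succ ^ 2) < x 0}

/-- The matrix `J = diag(1, −1, …, −1)`. -/
def Jmat (m : ℕ) : Matrix (Fin (m+1)) (Fin (m+1)) ℝ :=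
  Matrix.diagonal fun i => if i = 0 then 1 else -1

/-- The hyperplane `{x : x ⬝ u = 0}` as a submodule. -/
def perpHyp {n : ℕ} (u : Fin n → ℝ) : Submodule ℝ (Fin n → ℝ) where
  carrier := {x | x ⬝ᵥ u = 0}
  add_mem' := by
    intro a b ha hb
    simp only [Set.mem_setOf_eq, add_dotProduct] at *
    linarith
  zero_mem' := by simp [zero_dotProduct]
  smul_mem' := by
    intro c a ha
    simp only [Set.mem_setOf_eq, smul_dotProduct] at *
    simp [ha]

/-- A polyhedral cone: nonnegative combinations of finitely many vectors. -/
def IsPolyhedralCone {M : Type*} [AddCommMonoid M] [Module ℝ M] (S : Set M) : Prop :=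
  ∃ (k : ℕ) (g : Fin k → M),
    S = {x | ∃ c : Fin k → ℝ, (∀ i, 0 ≤ c i) ∧ x = ∑ i, c i • g i}

end

/-!
Since `x` takes both signs on `K` and `interior K` is dense in the convex set `K`, it takes both
signs on the convex set `interior K`, hence vanishes at some `z ∈ interior K`. Around `z` the
hyperplane `x⊥` stays in `interior K`, so `x⊥` is spanned by finitely many `w ∈ interior K ∩ x⊥`;
take `H = ∑ w wᵀ`. For copositive `A`, `⟨H, A⟩ = ∑ wᵀAw ≥ 0`, and if it vanishes then every `w`
is an interior minimiser of the quadratic form of `A`, so `Aw = 0`. A symmetric matrix killing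
`x⊥` is a multiple of `xxᵀ`, and the multiple is nonnegative because `x` does not vanish on `K`.
-/

open Filter Topology

section TopologicalVectorSpace

variable {E : Type*} [AddCommGroup E] [Module ℝ E] [TopologicalSpace E]
  [IsTopologicalAddGroup E] [ContinuousSMul ℝ E]

theorem Convex.exists_mem_interior_eq_zero {K : Set E} (hK : Convex ℝ K)
    (hint : (interior K).Nonempty) {f : E → ℝ} (hf : Continuous f) {y₁ y₂ : E}
    (hy₁ : y₁ ∈ K) (hy₂ : y₂ ∈ K) (hf₁ : f y₁ < 0) (hf₂ : 0 < f y₂) :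
    ∃ z ∈ interior K, f z = 0 := by
  have hdense : K ⊆ closure (interior K) :=
    hK.closure_interior_eq_closure_of_nonempty_interior hint ▸ subset_closure
  obtain ⟨v₁, hfv₁, hv₁⟩ :=
    mem_closure_iff.1 (hdense hy₁) _ (isOpen_lt hf continuous_const) hf₁
  obtain ⟨v₂, hfv₂, hv₂⟩ :=
    mem_closure_iff.1 (hdense hy₂) _ (isOpen_lt continuous_const hf) hf₂
  exact hK.interior.isPreconnected.intermediate_value hv₁ hv₂ hf.continuousOn
    ⟨le_of_lt hfv₁, le_of_lt hfv₂⟩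

theorem Submodule.FG.exists_finset_subset_span_eq_of_isOpen {P : Submodule ℝ E} (hP : P.FG)
    {U : Set E} (hU : IsOpen U) {z : E} (hzU : z ∈ U) (hzP : z ∈ P) :
    ∃ T : Finset E, ↑T ⊆ U ∩ P ∧ Submodule.span ℝ T = P := by
  classical
  obtain ⟨S, hS⟩ := hP
  have hnear : ∀ᶠ t : ℝ in 𝓝[>] 0, ∀ w ∈ S, z + t • w ∈ U := by
    refine nhdsWithin_le_nhds ((eventually_all_finset S).2 fun w _ => ?_)
    have hcont : Continuous fun t : ℝ => z + t • w := by fun_prop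
    exact hcont.continuousAt.preimage_mem_nhds (by simpa using hU.mem_nhds hzU)
  obtain ⟨t, hU', ht⟩ := (hnear.and self_mem_nhdsWithin).exists
  set T := insert z (S.image fun w => z + t • w)
  have hT : ↑T ⊆ U ∩ P := by
    intro v hv
    simp only [T, Finset.coe_insert, Finset.coe_image, Set.mem_insert_iff, Set.mem_image,
      Finset.mem_coe] at hv
    rcases hv with rfl | ⟨w, hw, rfl⟩
    · exact ⟨hzU, hzP⟩
    · exact ⟨hU' w hw, P.add_mem hzP (P.smul_mem t (hS ▸ Submodule.subset_span hw))⟩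
  refine ⟨T, hT, le_antisymm (Submodule.span_le.2 fun v hv => (hT hv).2) ?_⟩
  rw [← hS, Submodule.span_le]
  intro w hw
  have hz : z ∈ Submodule.span ℝ (T : Set E) := Submodule.subset_span (Finset.mem_insert_self _ _)
  have hzw : z + t • w ∈ Submodule.span ℝ (T : Set E) :=
    Submodule.subset_span (Finset.mem_insert_of_mem (Finset.mem_image_of_mem _ hw))
  have hw' : w = t⁻¹ • ((z + t • w) - z) := by
    rw [add_sub_cancel_left, smul_smul, inv_mul_cancel₀ (ne_of_gt ht), one_smul]
  rw [hw']
  exact Submodule.smul_mem _ _ (Submodule.sub_mem _ hzw hz)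

end TopologicalVectorSpace

section LinearAlgebra

open Matrix

variable {ι : Type*} [Fintype ι]

theorem eq_smul_of_forall_dotProduct_eq_zero {x w : ι → ℝ}
    (h : ∀ v, x ⬝ᵥ v = 0 → w ⬝ᵥ v = 0) : w = ((x ⬝ᵥ w) / (x ⬝ᵥ x)) • x := by
  set r := w - ((x ⬝ᵥ w) / (x ⬝ᵥ x)) • x
  have hxr : x ⬝ᵥ r = 0 := by
    rcases eq_or_ne x 0 with rfl | hx
    · exact zero_dotProduct r
    have hxx : x ⬝ᵥ x ≠ 0 := fun h => hx (dotProduct_self_eq_zero.1 h)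
    simp only [r, dotProduct_sub, dotProduct_smul, smul_eq_mul]
    field_simp
    ring
  have hrr : r ⬝ᵥ r = 0 :=
    calc r ⬝ᵥ r = w ⬝ᵥ r - (x ⬝ᵥ w) / (x ⬝ᵥ x) * (x ⬝ᵥ r) := by
          rw [sub_dotProduct, smul_dotProduct, smul_eq_mul]
      _ = 0 := by rw [h r hxr, hxr]; ring
  exact sub_eq_zero.1 (dotProduct_self_eq_zero.1 hrr)

theorem Matrix.IsSymm.dotProduct_mulVec_comm {A : Matrix ι ι ℝ} (hA : A.IsSymm) (u v : ι → ℝ) :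
    u ⬝ᵥ A *ᵥ v = v ⬝ᵥ A *ᵥ u := by
  rw [dotProduct_mulVec, ← mulVec_transpose, hA.eq, dotProduct_comm]

theorem Matrix.IsSymm.exists_eq_smul_vecMulVec {A : Matrix ι ι ℝ} (hA : A.IsSymm) {x : ι → ℝ}
    (h : ∀ v, x ⬝ᵥ v = 0 → A *ᵥ v = 0) : ∃ c : ℝ, A = c • vecMulVec x x := by
  set s := x ⬝ᵥ x
  set u := A *ᵥ x
  have hrow : ∀ i, A i = (u i / s) • x := fun i => by
    have := eq_smul_of_forall_dotProduct_eq_zero fun v hv => congrFun (h v hv) i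
    rwa [dotProduct_comm] at this
  obtain ⟨d, hd⟩ : ∃ d : ℝ, u = d • x :=
    ⟨_, eq_smul_of_forall_dotProduct_eq_zero fun v hv => by
      rw [dotProduct_comm, hA.dotProduct_mulVec_comm, h v hv, dotProduct_zero]⟩
  refine ⟨d / s, Matrix.ext fun i j => ?_⟩
  rw [hrow i, hd]
  simp only [Pi.smul_apply, smul_apply, smul_eq_mul, vecMulVec_apply]
  ring

theorem Matrix.IsSymm.dotProduct_mulVec_add_smul {A : Matrix ι ι ℝ} (hA : A.IsSymm)
    (y w : ι → ℝ) (t : ℝ) :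
    (y + t • w) ⬝ᵥ A *ᵥ (y + t • w) =
      y ⬝ᵥ A *ᵥ y + t * (2 * (w ⬝ᵥ A *ᵥ y)) + t ^ 2 * (w ⬝ᵥ A *ᵥ w) := by
  simp only [mulVec_add, mulVec_smul, add_dotProduct, dotProduct_add, smul_dotProduct,
    dotProduct_smul, smul_eq_mul, hA.dotProduct_mulVec_comm y w]
  ring

theorem dotProduct_vecMulVec_self_mulVec (x y : ι → ℝ) :
    y ⬝ᵥ vecMulVec x x *ᵥ y = (x ⬝ᵥ y) ^ 2 := by
  simp [vecMulVec_mulVec, dotProduct_comm, sq]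

end LinearAlgebra

theorem eq_zero_of_eventually_nonneg_mul_add_sq {b c : ℝ}
    (h : ∀ᶠ t in 𝓝 0, 0 ≤ t * b + t ^ 2 * c) : b = 0 := by
  have hmin : IsLocalMin (fun t : ℝ => t * b + t ^ 2 * c) 0 :=
    h.mono fun t ht => by simpa using ht
  have hderiv := ((hasDerivAt_id (0 : ℝ)).mul_const b).add ((hasDerivAt_pow 2 (0 : ℝ)).mul_const c)
  simp only [id_eq, one_mul, Nat.cast_ofNat, Nat.add_one_sub_one, pow_one, mul_zero, zero_mul,
    add_zero] at hderiv
  exact hmin.hasDerivAt_eq_zero hderiv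

section Copositive

open Matrix

variable {n : ℕ}

theorem zero_mem_COPset (K : Set (Fin n → ℝ)) : (0 : Matrix (Fin n) (Fin n) ℝ) ∈ COPset K :=
  ⟨isSymm_zero, fun x _ => by simp⟩

theorem smul_mem_COPset {K : Set (Fin n → ℝ)} {A : Matrix (Fin n) (Fin n) ℝ} (hA : A ∈ COPset K)
    {c : ℝ} (hc : 0 ≤ c) : c • A ∈ COPset K :=
  ⟨hA.1.smul c, fun x hx => by
    rw [smul_mulVec, dotProduct_smul, smul_eq_mul]
    exact mul_nonneg hc (hA.2 x hx)⟩

theorem convex_COPset (K : Set (Fin n → ℝ)) : Convex ℝ (COPset K) := by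
  intro A hA B hB a b ha hb _
  refine ⟨(hA.1.smul a).add (hB.1.smul b), fun x hx => ?_⟩
  rw [add_mulVec, dotProduct_add]
  exact add_nonneg ((smul_mem_COPset hA ha).2 x hx) ((smul_mem_COPset hB hb).2 x hx)

theorem smul_vecMulVec_self_mem_COPset (K : Set (Fin n → ℝ)) (x : Fin n → ℝ) {c : ℝ}
    (hc : 0 ≤ c) : c • vecMulVec x x ∈ COPset K := by
  refine smul_mem_COPset ⟨transpose_vecMulVec x x, fun y _ => ?_⟩ hc
  rw [dotProduct_vecMulVec_self_mulVec]
  exact sq_nonneg _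

theorem mulVec_eq_zero_of_mem_interior {K : Set (Fin n → ℝ)} {A : Matrix (Fin n) (Fin n) ℝ}
    (hA : A ∈ COPset K) {y : Fin n → ℝ} (hy : y ∈ interior K) (hq : y ⬝ᵥ A *ᵥ y = 0) :
    A *ᵥ y = 0 := by
  have hAy : ∀ w, w ⬝ᵥ A *ᵥ y = 0 := fun w => by
    have hmem : ∀ᶠ t : ℝ in 𝓝 0, y + t • w ∈ K := by
      have hcont : Continuous fun t : ℝ => y + t • w := by fun_prop
      exact hcont.continuousAt.preimage_mem_nhds
        (by simpa using mem_interior_iff_mem_nhds.1 hy)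
    have := eq_zero_of_eventually_nonneg_mul_add_sq (hmem.mono fun t ht => by
      simpa [hA.1.dotProduct_mulVec_add_smul, hq] using hA.2 _ ht)
    linarith
  exact dotProduct_self_eq_zero.1 (hAy _)

end Copositive

section Faces

open Matrix

variable {n : ℕ}

theorem mip_add_right (H A B : Matrix (Fin n) (Fin n) ℝ) :
    mip H (A + B) = mip H A + mip H B := by
  simp only [mip, Matrix.add_apply, mul_add, Finset.sum_add_distrib]

theorem mip_smul_right (H A : Matrix (Fin n) (Fin n) ℝ) (c : ℝ) :
    mip H (c • A) = c * mip H A := by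
  simp only [mip, Matrix.smul_apply, smul_eq_mul, Finset.mul_sum]
  exact Finset.sum_congr rfl fun i _ => Finset.sum_congr rfl fun j _ => by ring

theorem mip_sum_vecMulVec_self (T : Finset (Fin n → ℝ)) (A : Matrix (Fin n) (Fin n) ℝ) :
    mip (∑ w ∈ T, vecMulVec w w) A = ∑ w ∈ T, w ⬝ᵥ A *ᵥ w := by
  simp only [mip, Matrix.sum_apply, vecMulVec_apply, Finset.sum_mul, dotProduct, mulVec,
    Finset.mul_sum]
  conv_lhs => enter [2, i]; rw [Finset.sum_comm]
  rw [Finset.sum_comm]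
  exact Finset.sum_congr rfl fun w _ => Finset.sum_congr rfl fun i _ =>
    Finset.sum_congr rfl fun j _ => by ring

theorem isExposedFaceOf_setOf_mip_eq_zero {C : Set (Matrix (Fin n) (Fin n) ℝ)}
    (hC : Convex ℝ C) (hCcone : ∀ A ∈ C, ∀ c : ℝ, 0 ≤ c → c • A ∈ C) (hC0 : 0 ∈ C)
    {H : Matrix (Fin n) (Fin n) ℝ} (hH : ∀ A ∈ C, 0 ≤ mip H A) :
    IsExposedFaceOf C {A ∈ C | mip H A = 0} := by
  refine ⟨⟨⟨0, hC0, by simpa using mip_smul_right H 0 0⟩, fun A hA => hA.1, ?_, ?_, ?_⟩, H, hH, rfl⟩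
  · intro A hA B hB a b ha hb hab
    refine ⟨hC hA.1 hB.1 ha hb hab, ?_⟩
    rw [mip_add_right, mip_smul_right, mip_smul_right, hA.2, hB.2]
    ring
  · intro A hA c hc
    exact ⟨hCcone A hA.1 c hc, by rw [mip_smul_right, hA.2, mul_zero]⟩
  · intro A hA B hB hAB
    have hsum := mip_add_right H A B ▸ hAB.2
    have hA0 := hH A hA
    have hB0 := hH B hB
    exact ⟨⟨hA, by linarith⟩, ⟨hB, by linarith⟩⟩

end Faces

theorem setDim_rayOf {M : Type*} [AddCommGroup M] [Module ℝ M] {x : M} (hx : x ≠ 0) :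
    setDim (rayOf x) = 1 := by
  have hspan : Submodule.span ℝ (rayOf x) = ℝ ∙ x := by
    refine le_antisymm (Submodule.span_le.2 ?_) (Submodule.span_le.2 ?_)
    · rintro _ ⟨c, -, rfl⟩
      exact Submodule.smul_mem _ c (Submodule.mem_span_singleton_self x)
    · rw [Set.singleton_subset_iff]
      exact Submodule.subset_span ⟨1, zero_le_one, (one_smul ℝ x).symm⟩
  rw [setDim, hspan, finrank_span_singleton hx]

open Matrix in
theorem rayOf_vecMulVec_eq_setOf_mip_eq_zero {n : ℕ} {K : Set (Fin n → ℝ)} {x y : Fin n → ℝ}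
    (hyK : y ∈ K) (hxy : x ⬝ᵥ y ≠ 0) {T : Finset (Fin n → ℝ)}
    (hT : ↑T ⊆ interior K ∩ perpHyp x) (hTspan : Submodule.span ℝ T = perpHyp x) :
    rayOf (vecMulVec x x) = {A ∈ COPset K | mip (∑ w ∈ T, vecMulVec w w) A = 0} := by
  ext A
  constructor
  · rintro ⟨c, hc, rfl⟩
    refine ⟨smul_vecMulVec_self_mem_COPset K x hc, ?_⟩
    rw [mip_smul_right, mip_sum_vecMulVec_self, Finset.sum_eq_zero fun w hw => ?_, mul_zero]
    have hwx : w ⬝ᵥ x = 0 := (hT hw).2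
    rw [dotProduct_vecMulVec_self_mulVec, dotProduct_comm, hwx, sq, mul_zero]
  · rintro ⟨hA, hHA⟩
    rw [mip_sum_vecMulVec_self] at hHA
    have hq := (Finset.sum_eq_zero_iff_of_nonneg fun w hw =>
      hA.2 w (interior_subset (hT hw).1)).1 hHA
    have hker : perpHyp x ≤ LinearMap.ker A.mulVecLin := hTspan ▸ Submodule.span_le.2
      fun w hw => mulVec_eq_zero_of_mem_interior hA (hT hw).1 (hq w hw)
    obtain ⟨c, rfl⟩ := hA.1.exists_eq_smul_vecMulVec fun v hv =>
      hker (show v ⬝ᵥ x = 0 by rwa [dotProduct_comm])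
    have hcy := hA.2 y hyK
    rw [smul_mulVec, dotProduct_smul, dotProduct_vecMulVec_self_mulVec, smul_eq_mul] at hcy
    exact ⟨c, nonneg_of_mul_nonneg_left hcy (pow_two_pos_of_ne_zero hxy), rfl⟩

theorem stmt17_general (n : ℕ) (K : Set (Fin n → ℝ))
    (hKconv : Convex ℝ K)
    (hKint : (interior K).Nonempty)
    (x : Fin n → ℝ)
    (hx1 : ¬ ∀ y ∈ K, 0 ≤ x ⬝ᵥ y)
    (hx2 : ¬ ∀ y ∈ K, 0 ≤ (-x) ⬝ᵥ y) :
    IsExposedFaceOf (COPset K) (rayOf (Matrix.vecMulVec x x)) ∧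
      setDim (rayOf (Matrix.vecMulVec x x)) = 1 := by
  obtain ⟨y₁, hy₁K, hy₁⟩ : ∃ y ∈ K, x ⬝ᵥ y < 0 := by simpa using hx1
  obtain ⟨y₂, hy₂K, hy₂⟩ : ∃ y ∈ K, 0 < x ⬝ᵥ y := by simpa using hx2
  have hx : x ≠ 0 := by
    rintro rfl
    simp at hy₂
  obtain ⟨z, hz, hzx⟩ :=
    hKconv.exists_mem_interior_eq_zero hKint (f := (x ⬝ᵥ ·)) (by fun_prop) hy₁K hy₂K hy₁ hy₂
  obtain ⟨T, hT, hTspan⟩ := Submodule.FG.exists_finset_subset_span_eq_of_isOpen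
    (IsNoetherian.noetherian (perpHyp x)) isOpen_interior hz
    (show z ⬝ᵥ x = 0 by rwa [dotProduct_comm])
  have hH : ∀ A ∈ COPset K, 0 ≤ mip (∑ w ∈ T, Matrix.vecMulVec w w) A := fun A hA => by
    rw [mip_sum_vecMulVec_self]
    exact Finset.sum_nonneg fun w hw => hA.2 w (interior_subset (hT hw).1)
  refine ⟨?_, setDim_rayOf (Matrix.vecMulVec_ne_zero hx hx)⟩
  rw [rayOf_vecMulVec_eq_setOf_mip_eq_zero hy₂K hy₂.ne' hT hTspan]
  exact isExposedFaceOf_setOf_mip_eq_zero (convex_COPset K)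
    (fun A hA c hc => smul_mem_COPset hA hc) (zero_mem_COPset K) hH

/-- if `K ⊆ ℝⁿ` is a closed convex cone with nonempty interior and
`x ∉ K* ∪ (−K*)`, then `ℝ₊ xxᵀ` is an exposed ray of `COP(K)`. -/
theorem stmt17 (n : ℕ) (K : Set (Fin n → ℝ)) (hKcl : IsClosed K)
    (hKconv : Convex ℝ K)
    (hKcone : ∀ x ∈ K, ∀ c : ℝ, 0 ≤ c → c • x ∈ K)
    (hKint : (interior K).Nonempty)
    (x : Fin n → ℝ)
    (hx1 : ¬ ∀ y ∈ K, 0 ≤ x ⬝ᵥ y)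
    (hx2 : ¬ ∀ y ∈ K, 0 ≤ (-x) ⬝ᵥ y) :
    IsExposedFaceOf (COPset K) (rayOf (Matrix.vecMulVec x x)) ∧
      setDim (rayOf (Matrix.vecMulVec x x)) = 1 :=
  stmt17_general n K hKconv hKint x hx1 hx2
end

section
/- Let K be a closed cone in ℝⁿ and X a linear subspace of ℝⁿ. Then CP(X ∩ K) is an exposed face of CP(K). Moreover, if K is additionally convex and the linear span of X ∩ K has dimension d, then the dimension of CP(X ∩ K) equals T_d = d(d+1)/2. -/
open Matrix
open scoped Pointwise

/-!
Choose a matrix `B` with kernel `X`. For `H = BᵀB` one has `⟨H, aaᵀ⟩ = ‖Ba‖²`, so `⟨H, ·⟩` is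
nonnegative on `CP(K)` and a sum `∑ aᵢaᵢᵀ` with `aᵢ ∈ K` lies in its kernel exactly when all
`aᵢ ∈ X`. The zero set of a nonnegative linear functional on a convex cone is a face, so
`CP(X ∩ K)` is an exposed face of `CP(K)`.

If `K` is convex, `S = X ∩ K` is closed under addition, and polarization
`uvᵀ + vuᵀ = (u + v)(u + v)ᵀ - uuᵀ - vvᵀ` shows that `CP(S)` spans the space of symmetrized
products `uvᵀ + vuᵀ` with `u, v ∈ span S`. For a basis `e₁, …, e_d` of `span S`, this space is
the image of the symmetric `d × d` matrices under `M ↦ EᵀME` (the rows of `E` being the `eᵢ`),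
which is injective; hence its dimension is `d(d + 1)/2`.
-/

theorem add_mem_of_convex_of_smul_mem {M : Type*} [AddCommGroup M] [Module ℝ M] {K : Set M}
    (hconv : Convex ℝ K) (hcone : ∀ x ∈ K, ∀ c : ℝ, 0 ≤ c → c • x ∈ K) {u v : M}
    (hu : u ∈ K) (hv : v ∈ K) : u + v ∈ K := by
  have hmid : (2⁻¹ : ℝ) • u + (2⁻¹ : ℝ) • v ∈ K :=
    hconv hu hv (by norm_num) (by norm_num) (by norm_num)
  convert hcone _ hmid 2 zero_le_two using 1
  module

theorem isFaceOf_setOf_eq_zero {M : Type*} [AddCommMonoid M] [Module ℝ M] {C : Set M}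
    (hC : Convex ℝ C) (hCcone : ∀ x ∈ C, ∀ c : ℝ, 0 ≤ c → c • x ∈ C) (ℓ : M →ₗ[ℝ] ℝ)
    (hℓ : ∀ x ∈ C, 0 ≤ ℓ x) (hne : ∃ x ∈ C, ℓ x = 0) :
    IsFaceOf C {x ∈ C | ℓ x = 0} := by
  refine ⟨hne, fun x hx => hx.1, ?_, ?_, ?_⟩
  · intro x hx y hy a b ha hb hab
    exact ⟨hC hx.1 hy.1 ha hb hab, by simp [hx.2, hy.2]⟩
  · intro x hx c hc
    exact ⟨hCcone x hx.1 c hc, by simp [hx.2]⟩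
  · intro a ha b hb hab
    have hsum : ℓ a + ℓ b = 0 := by rw [← map_add]; exact hab.2
    have hℓa := hℓ a ha
    have hℓb := hℓ b hb
    exact ⟨⟨ha, by linarith⟩, ⟨hb, by linarith⟩⟩

theorem dotProduct_self_nonneg {ι : Type*} [Fintype ι] (v : ι → ℝ) : 0 ≤ v ⬝ᵥ v :=
  Finset.sum_nonneg fun i _ => mul_self_nonneg (v i)

section Exposed

variable {n : ℕ}

theorem vecMulVec_self_mem_CPset {S : Set (Fin n → ℝ)} {a : Fin n → ℝ} (ha : a ∈ S) :
    vecMulVec a a ∈ CPset S :=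
  ⟨1, one_pos, fun _ => a, fun _ => ha, by simp⟩

theorem add_mem_CPset {S : Set (Fin n → ℝ)} {A B : Matrix (Fin n) (Fin n) ℝ}
    (hA : A ∈ CPset S) (hB : B ∈ CPset S) : A + B ∈ CPset S := by
  obtain ⟨k, hk, f, hf, rfl⟩ := hA
  obtain ⟨l, -, g, hg, rfl⟩ := hB
  refine ⟨k + l, by omega, Fin.append f g,
    Fin.addCases (by simpa using hf) (by simpa using hg), ?_⟩
  simp [Fin.sum_univ_add]

theorem smul_mem_CPset {S : Set (Fin n → ℝ)} (hS : ∀ x ∈ S, ∀ c : ℝ, 0 ≤ c → c • x ∈ S)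
    {A : Matrix (Fin n) (Fin n) ℝ} {c : ℝ} (hc : 0 ≤ c) (hA : A ∈ CPset S) :
    c • A ∈ CPset S := by
  obtain ⟨k, hk, f, hf, rfl⟩ := hA
  refine ⟨k, hk, fun i => √c • f i, fun i => hS _ (hf i) _ (Real.sqrt_nonneg c), ?_⟩
  simp only [Finset.smul_sum, smul_vecMulVec, vecMulVec_smul, smul_smul, Real.mul_self_sqrt hc]

theorem convex_CPset {S : Set (Fin n → ℝ)} (hS : ∀ x ∈ S, ∀ c : ℝ, 0 ≤ c → c • x ∈ S) :
    Convex ℝ (CPset S) :=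
  fun _ hA _ hB _ _ ha hb _ => add_mem_CPset (smul_mem_CPset hS ha hA) (smul_mem_CPset hS hb hB)

def mipLinear (H : Matrix (Fin n) (Fin n) ℝ) : Matrix (Fin n) (Fin n) ℝ →ₗ[ℝ] ℝ where
  toFun := mip H
  map_add' A B := by simp only [mip, Matrix.add_apply, mul_add, Finset.sum_add_distrib]
  map_smul' c A := by
    simp only [mip, Matrix.smul_apply, smul_eq_mul, RingHom.id_apply, Finset.mul_sum]
    exact Finset.sum_congr rfl fun i _ => Finset.sum_congr rfl fun j _ => by ring

@[simp]
theorem mipLinear_apply (H A : Matrix (Fin n) (Fin n) ℝ) : mipLinear H A = mip H A := rfl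

theorem mip_vecMulVec_self (H : Matrix (Fin n) (Fin n) ℝ) (a : Fin n → ℝ) :
    mip H (vecMulVec a a) = a ⬝ᵥ H *ᵥ a := by
  simp only [mip, vecMulVec_apply, dotProduct, mulVec, Finset.mul_sum]
  exact Finset.sum_congr rfl fun i _ => Finset.sum_congr rfl fun j _ => by ring

theorem mip_gram_vecMulVec_self {m : ℕ} (B : Matrix (Fin m) (Fin n) ℝ) (a : Fin n → ℝ) :
    mip (Bᵀ * B) (vecMulVec a a) = (B *ᵥ a) ⬝ᵥ (B *ᵥ a) := by
  rw [mip_vecMulVec_self, ← mulVec_mulVec, dotProduct_mulVec, vecMul_transpose]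

theorem mip_gram_sum {m k : ℕ} (B : Matrix (Fin m) (Fin n) ℝ) (f : Fin k → Fin n → ℝ) :
    mip (Bᵀ * B) (∑ i, vecMulVec (f i) (f i)) = ∑ i, (B *ᵥ f i) ⬝ᵥ (B *ᵥ f i) := by
  rw [← mipLinear_apply, map_sum]
  simp only [mipLinear_apply, mip_gram_vecMulVec_self]

theorem mip_gram_nonneg_of_mem_CPset {m : ℕ} (B : Matrix (Fin m) (Fin n) ℝ)
    {K : Set (Fin n → ℝ)} {A : Matrix (Fin n) (Fin n) ℝ} (hA : A ∈ CPset K) :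
    0 ≤ mip (Bᵀ * B) A := by
  obtain ⟨k, -, f, -, rfl⟩ := hA
  rw [mip_gram_sum]
  exact Finset.sum_nonneg fun i _ => dotProduct_self_nonneg _

theorem CPset_inter_eq_setOf_mip_gram_eq_zero {m : ℕ} {B : Matrix (Fin m) (Fin n) ℝ}
    {X : Submodule ℝ (Fin n → ℝ)} (hB : ∀ x, B *ᵥ x = 0 ↔ x ∈ X) (K : Set (Fin n → ℝ)) :
    CPset ((X : Set (Fin n → ℝ)) ∩ K) = {A ∈ CPset K | mip (Bᵀ * B) A = 0} := by
  ext A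
  constructor
  · rintro ⟨k, hk, f, hf, rfl⟩
    refine ⟨⟨k, hk, f, fun i => (hf i).2, rfl⟩, ?_⟩
    rw [mip_gram_sum]
    exact Finset.sum_eq_zero fun i _ => by rw [(hB _).2 (hf i).1, dotProduct_zero]
  · rintro ⟨⟨k, hk, f, hf, rfl⟩, hzero⟩
    rw [mip_gram_sum, Finset.sum_eq_zero_iff_of_nonneg fun i _ => dotProduct_self_nonneg _]
      at hzero
    refine ⟨k, hk, f, fun i => ⟨(hB _).1 ?_, hf i⟩, rfl⟩
    exact dotProduct_self_eq_zero.1 (hzero i (Finset.mem_univ i))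

theorem exists_mulVec_eq_zero_iff_mem (X : Submodule ℝ (Fin n → ℝ)) :
    ∃ (m : ℕ) (B : Matrix (Fin m) (Fin n) ℝ), ∀ x, B *ᵥ x = 0 ↔ x ∈ X := by
  let f := (Module.finBasis ℝ ((Fin n → ℝ) ⧸ X)).equivFun.toLinearMap ∘ₗ X.mkQ
  refine ⟨_, LinearMap.toMatrix' f, fun x => ?_⟩
  simp [f, LinearMap.toMatrix'_mulVec, Submodule.Quotient.mk_eq_zero]

theorem isExposedFaceOf_CPset_inter {K : Set (Fin n → ℝ)}
    (hKcone : ∀ x ∈ K, ∀ c : ℝ, 0 ≤ c → c • x ∈ K) (hK0 : (0 : Fin n → ℝ) ∈ K)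
    (X : Submodule ℝ (Fin n → ℝ)) :
    IsExposedFaceOf (CPset K) (CPset ((X : Set (Fin n → ℝ)) ∩ K)) := by
  obtain ⟨m, B, hB⟩ := exists_mulVec_eq_zero_iff_mem X
  have hface := CPset_inter_eq_setOf_mip_gram_eq_zero hB K
  have hzero : vecMulVec 0 0 ∈ CPset ((X : Set (Fin n → ℝ)) ∩ K) :=
    vecMulVec_self_mem_CPset ⟨X.zero_mem, hK0⟩
  rw [hface] at hzero ⊢
  exact ⟨isFaceOf_setOf_eq_zero (convex_CPset hKcone)
    (fun _ hA _ hc => smul_mem_CPset hKcone hc hA) (mipLinear (Bᵀ * B))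
    (fun _ => mip_gram_nonneg_of_mem_CPset B) ⟨_, hzero⟩,
    Bᵀ * B, fun _ => mip_gram_nonneg_of_mem_CPset B, rfl⟩

end Exposed

theorem eq_zero_of_mul_eq_zero_of_linearIndependent {k l m : Type*} [Fintype k]
    {E : Matrix k m ℝ} (hE : LinearIndependent ℝ E.row) {N : Matrix l k ℝ} (h : N * E = 0) :
    N = 0 :=
  Matrix.ext fun i j => congrFun (Matrix.vecMul_injective_iff.2 hE (a₂ := 0)
    (by dsimp only; rw [zero_vecMul]; exact congrFun h i)) j

section Dimension

variable {n : ℕ}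

def symVecMulVec : (Fin n → ℝ) →ₗ[ℝ] (Fin n → ℝ) →ₗ[ℝ] Matrix (Fin n) (Fin n) ℝ :=
  vecMulVecBilin ℝ ℝ + (vecMulVecBilin ℝ ℝ).flip

@[simp]
theorem symVecMulVec_apply (u v : Fin n → ℝ) :
    symVecMulVec u v = vecMulVec u v + vecMulVec v u := rfl

theorem vecMulVec_self_eq_half_symVecMulVec (a : Fin n → ℝ) :
    vecMulVec a a = (2⁻¹ : ℝ) • symVecMulVec a a := by
  rw [symVecMulVec_apply, ← two_smul ℝ, smul_smul, inv_mul_cancel₀ two_ne_zero, one_smul]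

theorem span_CPset_eq_map₂ {S : Set (Fin n → ℝ)} (hS : ∀ u ∈ S, ∀ v ∈ S, u + v ∈ S) :
    Submodule.span ℝ (CPset S) =
      Submodule.map₂ symVecMulVec (Submodule.span ℝ S) (Submodule.span ℝ S) := by
  rw [Submodule.map₂_span_span]
  apply le_antisymm <;> rw [Submodule.span_le]
  · rintro _ ⟨k, -, f, hf, rfl⟩
    refine Submodule.sum_mem _ fun i _ => ?_
    rw [vecMulVec_self_eq_half_symVecMulVec]
    exact Submodule.smul_mem _ _ (Submodule.subset_span ⟨_, hf i, _, hf i, rfl⟩)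
  · rintro _ ⟨u, hu, v, hv, rfl⟩
    have polarization : symVecMulVec u v =
        vecMulVec (u + v) (u + v) - vecMulVec u u - vecMulVec v v := by
      simp only [symVecMulVec_apply, add_vecMulVec, vecMulVec_add]
      abel
    change symVecMulVec u v ∈ _
    rw [polarization]
    exact Submodule.sub_mem _ (Submodule.sub_mem _
      (Submodule.subset_span (vecMulVec_self_mem_CPset (hS u hu v hv)))
      (Submodule.subset_span (vecMulVec_self_mem_CPset hu)))
      (Submodule.subset_span (vecMulVec_self_mem_CPset hv))

variable {d : ℕ}

def symSingle : Sym2 (Fin d) → Matrix (Fin d) (Fin d) ℝ :=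
  Sym2.lift ⟨fun i j => single i j 1 + single j i 1, fun _ _ => add_comm _ _⟩

theorem symSingle_apply_of_ne {z : Sym2 (Fin d)} {i j : Fin d} (h : z ≠ s(i, j)) :
    symSingle z i j = 0 := by
  induction z using Sym2.ind with
  | h a b =>
    simp only [symSingle, Sym2.lift_mk, Matrix.add_apply, single_apply]
    rw [Ne, Sym2.eq_iff] at h
    grind

theorem symSingle_apply_self_pos (i j : Fin d) : 0 < symSingle s(i, j) i j := by
  rcases eq_or_ne i j with rfl | hij <;> simp [symSingle, *]

theorem linearIndependent_symSingle : LinearIndependent ℝ (symSingle (d := d)) := by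
  rw [Fintype.linearIndependent_iff]
  intro c hc z
  induction z using Sym2.ind with
  | h i j =>
    have hentry := congrFun (congrFun hc i) j
    simp only [Matrix.sum_apply, Matrix.smul_apply, smul_eq_mul, Matrix.zero_apply] at hentry
    rw [Finset.sum_eq_single s(i, j) (fun z _ hz => by rw [symSingle_apply_of_ne hz, mul_zero])
      (by simp)] at hentry
    exact (mul_eq_zero.1 hentry).resolve_right (symSingle_apply_self_pos i j).ne'

def congrByRows (e : Fin d → Fin n → ℝ) :
    Matrix (Fin d) (Fin d) ℝ →ₗ[ℝ] Matrix (Fin n) (Fin n) ℝ where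
  toFun M := (of e)ᵀ * M * of e
  map_add' M N := by simp [Matrix.mul_add, Matrix.add_mul]
  map_smul' c M := by simp

theorem congrByRows_single (e : Fin d → Fin n → ℝ) (i j : Fin d) :
    congrByRows e (single i j 1) = vecMulVec (e i) (e j) := by
  ext a b
  simp [congrByRows, Matrix.mul_apply, vecMulVec_apply, single_apply, ite_and]

theorem congrByRows_symSingle (e : Fin d → Fin n → ℝ) (i j : Fin d) :
    congrByRows e (symSingle s(i, j)) = symVecMulVec (e i) (e j) := by
  simp [symSingle, congrByRows_single]

theorem congrByRows_injective {e : Fin d → Fin n → ℝ} (he : LinearIndependent ℝ e) :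
    Function.Injective (congrByRows e) := by
  rw [← LinearMap.ker_eq_bot, LinearMap.ker_eq_bot']
  intro M hM
  have hMEt : (M * of e)ᵀ * of e = 0 := by
    rw [← transpose_transpose (of e), ← transpose_mul, transpose_transpose, ← Matrix.mul_assoc]
    exact (congrArg transpose hM).trans transpose_zero
  have hME : M * of e = 0 := by
    rw [← transpose_transpose (M * of e),
      eq_zero_of_mul_eq_zero_of_linearIndependent (E := of e) he hMEt, transpose_zero]
  exact eq_zero_of_mul_eq_zero_of_linearIndependent (E := of e) he hME

theorem finrank_span_image2_symVecMulVec {e : Fin d → Fin n → ℝ} (he : LinearIndependent ℝ e) :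
    Module.finrank ℝ (Submodule.span ℝ
      (Set.image2 (fun u v => symVecMulVec u v) (Set.range e) (Set.range e))) =
      d * (d + 1) / 2 := by
  have hrange : Set.image2 (fun u v => symVecMulVec u v) (Set.range e) (Set.range e) =
      Set.range (congrByRows e ∘ symSingle) := by
    ext M
    constructor
    · rintro ⟨_, ⟨i, rfl⟩, _, ⟨j, rfl⟩, rfl⟩
      exact ⟨s(i, j), congrByRows_symSingle e i j⟩
    · rintro ⟨z, rfl⟩
      induction z using Sym2.ind with
      | h i j => exact ⟨_, ⟨i, rfl⟩, _, ⟨j, rfl⟩, (congrByRows_symSingle e i j).symm⟩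
  have hindep := linearIndependent_symSingle.map' _
    (LinearMap.ker_eq_bot.2 (congrByRows_injective he))
  rw [hrange, finrank_span_eq_card hindep, Sym2.card, Fintype.card_fin, Nat.choose_two_right,
    Nat.add_sub_cancel, Nat.mul_comm]

theorem finrank_map₂_symVecMulVec (V : Submodule ℝ (Fin n → ℝ)) :
    Module.finrank ℝ (Submodule.map₂ symVecMulVec V V) =
      Module.finrank ℝ V * (Module.finrank ℝ V + 1) / 2 := by
  let b := Module.finBasis ℝ V
  have hV : Submodule.span ℝ (Set.range (V.subtype ∘ b)) = V := by
    rw [Set.range_comp, Submodule.span_image, b.span_eq, Submodule.map_top,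
      Submodule.range_subtype]
  conv_lhs => rw [← hV, Submodule.map₂_span_span]
  exact finrank_span_image2_symVecMulVec (b.linearIndependent.map' V.subtype V.ker_subtype)

end Dimension

theorem stmt18_general (n : ℕ) (K : Set (Fin n → ℝ))
    (hKcone : ∀ x ∈ K, ∀ c : ℝ, 0 ≤ c → c • x ∈ K)
    (hK0 : (0 : Fin n → ℝ) ∈ K)
    (X : Submodule ℝ (Fin n → ℝ)) :
    IsExposedFaceOf (CPset K) (CPset ((X : Set (Fin n → ℝ)) ∩ K)) ∧
    ∀ d : ℕ, Convex ℝ K →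
      Module.finrank ℝ (Submodule.span ℝ ((X : Set (Fin n → ℝ)) ∩ K)) = d →
      setDim (CPset ((X : Set (Fin n → ℝ)) ∩ K)) = d * (d + 1) / 2 := by
  refine ⟨isExposedFaceOf_CPset_inter hKcone hK0 X, fun d hconv hd => ?_⟩
  have hadd : ∀ u ∈ (X : Set (Fin n → ℝ)) ∩ K, ∀ v ∈ (X : Set (Fin n → ℝ)) ∩ K,
      u + v ∈ (X : Set (Fin n → ℝ)) ∩ K := fun u hu v hv =>
    ⟨X.add_mem hu.1 hv.1, add_mem_of_convex_of_smul_mem hconv hKcone hu.2 hv.2⟩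
  rw [setDim, span_CPset_eq_map₂ hadd, finrank_map₂_symVecMulVec, hd]

/-- for a closed cone `K` and a subspace `X` of `ℝⁿ`, `CP(X ∩ K)` is an
exposed face of `CP(K)`; if moreover `K` is convex and `span(X ∩ K)` has dimension `d`,
then `dim CP(X ∩ K) = d(d+1)/2`. -/
theorem stmt18 (n : ℕ) (K : Set (Fin n → ℝ)) (hKcl : IsClosed K)
    (hKcone : ∀ x ∈ K, ∀ c : ℝ, 0 ≤ c → c • x ∈ K)
    (hK0 : (0 : Fin n → ℝ) ∈ K)
    (X : Submodule ℝ (Fin n → ℝ)) :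
    IsExposedFaceOf (CPset K) (CPset ((X : Set (Fin n → ℝ)) ∩ K)) ∧
    ∀ d : ℕ, Convex ℝ K →
      Module.finrank ℝ (Submodule.span ℝ ((X : Set (Fin n → ℝ)) ∩ K)) = d →
      setDim (CPset ((X : Set (Fin n → ℝ)) ∩ K)) = d * (d + 1) / 2 :=
  stmt18_general n K hKcone hK0 X
end
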